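/- Let M = UΣVᵀ be a rank-r matrix in ℝ^{n×n} satisfying assumptions A1 and A2 with parameter δ_d, and let Ω be generated by a d-regular bipartite graph whose biadjacency matrix G satisfies G1 and G2 with constant C. Suppose √(2·(δ_d² + C²μ₀²r²/d)) < 1/2. Then every Z ∈ ℝ^{n×n} with P_Ω(Z) = 0 and P_T(Z) ≠ 0 satisfies ‖P_{T⊥}(Z)‖_F > √(d/(2n))·‖P_T(Z)‖_F; in particular ‖P_{T⊥}(Z)‖_* > √(d/(2n))·‖P_T(Z)‖_F. -/

import Mathlib

open Matrix
open scoped BigOperators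

noncomputable section

/-- Euclidean norm of a vector. -/
def vecNorm {β : Type*} [Fintype β] (x : β → ℝ) : ℝ :=
  Real.sqrt (∑ i, x i ^ 2)

/-- Spectral norm (largest singular value) of a real matrix. -/
def specNorm {α β : Type*} [Fintype α] [Fintype β] (A : Matrix α β ℝ) : ℝ :=
  sSup {c | ∃ x : β → ℝ, vecNorm x ≤ 1 ∧ c = vecNorm (A.mulVec x)}

/-- Second largest singular value of a real matrix (Courant–Fischer characterization). -/
def sigma2 {α β : Type*} [Fintype α] [Fintype β] (A : Matrix α β ℝ) : ℝ :=
  ⨅ v : β → ℝ, sSup {c | ∃ x : β → ℝ,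
    vecNorm x ≤ 1 ∧ (∑ i, v i * x i) = 0 ∧ c = vecNorm (A.mulVec x)}

/-- Frobenius norm. -/
def frobNorm {α β : Type*} [Fintype α] [Fintype β] (A : Matrix α β ℝ) : ℝ :=
  Real.sqrt (∑ i, ∑ j, A i j ^ 2)

/-- Nuclear norm: the sum of the singular values, i.e. the trace of `√(AᵀA)`. -/
def nuclearNorm {α β : Type*} [Fintype α] [Fintype β] [DecidableEq β]
    (A : Matrix α β ℝ) : ℝ :=
  ((Matrix.posSemidef_conjTranspose_mul_self A).1.eigenvectorUnitary.1 *
      Matrix.diagonal (Real.sqrt ∘ (Matrix.posSemidef_conjTranspose_mul_self A).1.eigenvalues) *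
      (star (Matrix.posSemidef_conjTranspose_mul_self A).1.eigenvectorUnitary :
        Matrix β β ℝ)).trace

/-- The sampling operator `P_Ω`. -/
def sampl {n : ℕ} (Ω : Finset (Fin n × Fin n)) (M : Matrix (Fin n) (Fin n) ℝ) :
    Matrix (Fin n) (Fin n) ℝ :=
  Matrix.of fun i j => if (i, j) ∈ Ω then M i j else 0

/-- The biadjacency matrix `G` of the bipartite graph with edge set `Ω`. -/
def biadj {n : ℕ} (Ω : Finset (Fin n × Fin n)) : Matrix (Fin n) (Fin n) ℝ :=
  Matrix.of fun i j => if (i, j) ∈ Ω then (1 : ℝ) else 0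

/-- `Ω` is the edge set of a `d`-regular bipartite graph: every row and every column
of `G` has exactly `d` ones. -/
def RegularSampling {n : ℕ} (Ω : Finset (Fin n × Fin n)) (d : ℕ) : Prop :=
  (∀ i : Fin n, (Finset.univ.filter fun j => (i, j) ∈ Ω).card = d) ∧
  (∀ j : Fin n, (Finset.univ.filter fun i => (i, j) ∈ Ω).card = d)

/-- Assumption G1: the all-ones vector is a top left- and right-singular vector of `G`,
with `σ₁(G) = d`. -/
def AssumptionG1 {n : ℕ} (Ω : Finset (Fin n × Fin n)) (d : ℕ) : Prop :=
  specNorm (biadj Ω) = d ∧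
  (biadj Ω).mulVec (fun _ => 1) = (fun _ => (d : ℝ)) ∧
  Matrix.vecMul (fun _ => 1) (biadj Ω) = (fun _ => (d : ℝ))

/-- Assumption G2: `σ₂(G) ≤ C·√d`. -/
def AssumptionG2 {n : ℕ} (Ω : Finset (Fin n × Fin n)) (d : ℕ) (C : ℝ) : Prop :=
  sigma2 (biadj Ω) ≤ C * Real.sqrt d

/-- Assumption A1 (`μ₀`-incoherence) for one factor: every row `U^i` satisfies
`‖U^i‖² ≤ μ₀ r / n`. -/
def IncoherentRows {n r : ℕ} (U : Matrix (Fin n) (Fin r) ℝ) (μ₀ : ℝ) : Prop :=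
  ∀ i : Fin n, (∑ k, U i k ^ 2) ≤ μ₀ * r / n

/-- Assumption A2 (strong incoherence with parameter `δ`) for one factor:
for every `S` with `|S| = d`, `‖(n/d)·∑_{k∈S} U^k (U^k)ᵀ − I‖ ≤ δ`. -/
def StrongIncoherence {n r : ℕ} (U : Matrix (Fin n) (Fin r) ℝ) (d : ℕ) (δ : ℝ) : Prop :=
  ∀ S : Finset (Fin n), S.card = d →
    specNorm (((n : ℝ) / (d : ℝ)) • (∑ k ∈ S, Matrix.vecMulVec (U k) (U k)) - 1) ≤ δ

/-- `M = U · diagonal s · Vᵀ` is a thin SVD of the rank-`r` matrix `M`. -/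
def IsThinSVD {n r : ℕ} (M : Matrix (Fin n) (Fin n) ℝ)
    (U : Matrix (Fin n) (Fin r) ℝ) (s : Fin r → ℝ) (V : Matrix (Fin n) (Fin r) ℝ) : Prop :=
  Uᵀ * U = 1 ∧ Vᵀ * V = 1 ∧ (∀ i, 0 < s i) ∧ M = U * Matrix.diagonal s * Vᵀ

/-- The projection `P_T` onto the subspace `T` spanned by matrices `UXᵀ` and `YVᵀ`. -/
def projT {n r : ℕ} (U V : Matrix (Fin n) (Fin r) ℝ) (Z : Matrix (Fin n) (Fin n) ℝ) :
    Matrix (Fin n) (Fin n) ℝ :=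
  U * Uᵀ * Z + Z * (V * Vᵀ) - U * Uᵀ * Z * (V * Vᵀ)

/-- The projection `P_{T⊥}` onto the orthogonal complement of `T`. -/
def projTperp {n r : ℕ} (U V : Matrix (Fin n) (Fin r) ℝ) (Z : Matrix (Fin n) (Fin n) ℝ) :
    Matrix (Fin n) (Fin n) ℝ :=
  (1 - U * Uᵀ) * Z * (1 - V * Vᵀ)

end

/-!
Write `P_T Z = U A + B Vᵀ` with `A = Uᵀ Z` and `B = (I - U Uᵀ) Z V`; since `Uᵀ B = 0` the two
pieces are Frobenius-orthogonal, so `‖P_T Z‖² = ‖A‖² + ‖B‖²`. As `P_Ω Z = 0`, the entries of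
`P_T Z` on `Ω` are those of `-P_{T⊥} Z`, whence `‖P_Ω P_T Z‖ ≤ ‖P_{T⊥} Z‖`.

On the other hand `P_Ω` nearly preserves the energy of `P_T Z`. Every column of `Ω` has `d`
entries, so A2 gives `‖P_Ω (U A)‖² ≥ (d/n)(1 - δ)‖A‖²` column by column, and in the same way
`‖P_Ω (B Vᵀ)‖² ≥ (d/n)(1 - δ)‖B‖²` row by row. Because `U A ⟂ B Vᵀ`, the cross term only sees
`G - (d/n) 𝟙𝟙ᵀ`; expanding it along the rank-one pieces of `U A` and `B Vᵀ` gives bilinear forms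
of norm at most `σ₂(G) ≤ C √d` (G1, G2), applied to vectors whose squared norms add up to at
most `(μ₀ r / n)‖P_T Z‖²` (A1). The smallness hypothesis makes the resulting constant
`(d/n)(1 - δ - C μ₀ r / √d)` exceed `d / (2n)`, and `‖·‖_F ≤ ‖·‖_*` gives the second claim.
-/

open Finset

section VecNorm

variable {α β : Type*} [Fintype α] [Fintype β]

lemma vecNorm_nonneg (x : β → ℝ) : 0 ≤ vecNorm x := Real.sqrt_nonneg _

lemma vecNorm_sq (x : β → ℝ) : vecNorm x ^ 2 = x ⬝ᵥ x := by
  rw [vecNorm, Real.sq_sqrt (by positivity)]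
  simp only [dotProduct, sq]

lemma vecNorm_pos {x : β → ℝ} (hx : x ≠ 0) : 0 < vecNorm x := by
  refine lt_of_le_of_ne (vecNorm_nonneg x) fun h => hx ?_
  have h0 : x ⬝ᵥ x = 0 := by rw [← vecNorm_sq, ← h, sq, zero_mul]
  simpa using h0

lemma vecNorm_smul (t : ℝ) (x : β → ℝ) : vecNorm (t • x) = |t| * vecNorm x := by
  rw [vecNorm, vecNorm, ← Real.sqrt_sq_eq_abs, ← Real.sqrt_mul (sq_nonneg t), mul_sum]
  simp only [Pi.smul_apply, smul_eq_mul, mul_pow]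

lemma abs_dotProduct_le (x y : β → ℝ) : |x ⬝ᵥ y| ≤ vecNorm x * vecNorm y := by
  calc |x ⬝ᵥ y| ≤ ∑ i, |x i| * |y i| := by
        simpa only [dotProduct, abs_mul] using abs_sum_le_sum_abs (fun i => x i * y i) univ
    _ ≤ vecNorm x * vecNorm y := by
        simpa only [vecNorm, sq_abs] using
          Real.sum_mul_le_sqrt_mul_sqrt univ (fun i => |x i|) (fun i => |y i|)

lemma vecNorm_sq_smul_add_smul {x w : β → ℝ} (hxw : x ⬝ᵥ w = 0) (a b : ℝ) :
    vecNorm (a • x + b • w) ^ 2 = a ^ 2 * vecNorm x ^ 2 + b ^ 2 * vecNorm w ^ 2 := by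
  simp only [vecNorm_sq, add_dotProduct, dotProduct_add, smul_dotProduct, dotProduct_smul,
    dotProduct_comm w x, hxw, smul_eq_mul]
  ring

lemma vecNorm_mulVec_le_frobNorm (A : Matrix α β ℝ) {x : β → ℝ} (hx : vecNorm x ≤ 1) :
    vecNorm (A *ᵥ x) ≤ frobNorm A := by
  have hrow : ∀ i, (A *ᵥ x) i ^ 2 ≤ ∑ j, A i j ^ 2 := fun i => by
    calc (A *ᵥ x) i ^ 2 ≤ (vecNorm (A i) * vecNorm x) ^ 2 :=
          sq_le_sq' (abs_le.mp (abs_dotProduct_le _ _)).1 (abs_le.mp (abs_dotProduct_le _ _)).2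
      _ ≤ vecNorm (A i) ^ 2 := by
          rw [mul_pow]
          exact mul_le_of_le_one_right (sq_nonneg _)
            (pow_le_one₀ (vecNorm_nonneg x) hx)
      _ = ∑ j, A i j ^ 2 := Real.sq_sqrt (by positivity)
  exact Real.sqrt_le_sqrt (sum_le_sum fun i _ => hrow i)

end VecNorm

section OperatorNorms

variable {α β : Type*} [Fintype α] [Fintype β]

lemma vecNorm_mulVec_le_specNorm_mul (A : Matrix α β ℝ) (x : β → ℝ) :
    vecNorm (A *ᵥ x) ≤ specNorm A * vecNorm x := by
  have hbdd : BddAbove {c | ∃ x : β → ℝ, vecNorm x ≤ 1 ∧ c = vecNorm (A *ᵥ x)} :=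
    ⟨frobNorm A, by rintro _ ⟨x, hx, rfl⟩; exact vecNorm_mulVec_le_frobNorm A hx⟩
  rcases eq_or_ne x 0 with rfl | hx
  · simp [vecNorm]
  have hpos := vecNorm_pos hx
  have hunit : vecNorm ((vecNorm x)⁻¹ • x) = 1 := by
    rw [vecNorm_smul, abs_of_pos (inv_pos.mpr hpos), inv_mul_cancel₀ hpos.ne']
  have h := le_csSup hbdd ⟨_, hunit.le, rfl⟩
  rw [mulVec_smul, vecNorm_smul, abs_of_pos (inv_pos.mpr hpos), inv_mul_le_iff₀ hpos] at h
  exact h.trans_eq (mul_comm _ _)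

lemma bddAbove_sigma2_set (A : Matrix α β ℝ) (v : β → ℝ) :
    BddAbove {c | ∃ x : β → ℝ, vecNorm x ≤ 1 ∧ (∑ i, v i * x i) = 0 ∧
      c = vecNorm (A *ᵥ x)} :=
  ⟨frobNorm A, by rintro _ ⟨x, hx, -, rfl⟩; exact vecNorm_mulVec_le_frobNorm A hx⟩

lemma sigma2_nonneg (A : Matrix α β ℝ) : 0 ≤ sigma2 A :=
  le_ciInf fun v => le_csSup (bddAbove_sigma2_set A v)
    ⟨0, by simp [vecNorm], by simp, by simp [vecNorm]⟩

lemma le_sigma2 {A : Matrix α β ℝ} {c : ℝ}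
    (h : ∀ v : β → ℝ, ∃ z, z ≠ 0 ∧ v ⬝ᵥ z = 0 ∧ c * vecNorm z ≤ vecNorm (A *ᵥ z)) :
    c ≤ sigma2 A := by
  refine le_ciInf fun v => ?_
  obtain ⟨z, hz, hvz, hcz⟩ := h v
  have hpos := vecNorm_pos hz
  have hunit : vecNorm ((vecNorm z)⁻¹ • z) = 1 := by
    rw [vecNorm_smul, abs_of_pos (inv_pos.mpr hpos), inv_mul_cancel₀ hpos.ne']
  refine le_trans ?_ (le_csSup (bddAbove_sigma2_set A v)
    ⟨_, hunit.le, show v ⬝ᵥ _ = 0 by rw [dotProduct_smul, hvz, smul_zero], rfl⟩)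
  rw [mulVec_smul, vecNorm_smul, abs_of_pos (inv_pos.mpr hpos), le_inv_mul_iff₀ hpos]
  exact (mul_comm _ _).trans_le hcz

/-- A plane on which `A` expands every vector by at least `c` meets every hyperplane
nontrivially, so `c ≤ σ₂(A)`. -/
lemma le_sigma2_of_orthogonal {A : Matrix α β ℝ} {x w : β → ℝ} {c : ℝ}
    (hx : x ≠ 0) (hw : w ≠ 0) (hxw : x ⬝ᵥ w = 0) (hAxw : A *ᵥ x ⬝ᵥ A *ᵥ w = 0)
    (hcx : c * vecNorm x ≤ vecNorm (A *ᵥ x)) (hcw : c * vecNorm w ≤ vecNorm (A *ᵥ w)) :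
    c ≤ sigma2 A := by
  rcases le_or_gt c 0 with hc | hc
  · exact hc.trans (sigma2_nonneg A)
  refine le_sigma2 fun v => ?_
  by_cases hvw : v ⬝ᵥ w = 0
  · exact ⟨w, hw, hvw, hcw⟩
  set a := v ⬝ᵥ w
  set b := -(v ⬝ᵥ x)
  have hsq (u : β → ℝ) (hu : c * vecNorm u ≤ vecNorm (A *ᵥ u)) :
      c ^ 2 * vecNorm u ^ 2 ≤ vecNorm (A *ᵥ u) ^ 2 := by
    rw [← mul_pow]; exact pow_le_pow_left₀ (mul_nonneg hc.le (vecNorm_nonneg u)) hu 2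
  have hz : c ^ 2 * vecNorm (a • x + b • w) ^ 2 ≤ vecNorm (A *ᵥ (a • x + b • w)) ^ 2 := by
    rw [mulVec_add, mulVec_smul, mulVec_smul, vecNorm_sq_smul_add_smul hxw,
      vecNorm_sq_smul_add_smul hAxw]
    nlinarith [hsq x hcx, hsq w hcw, sq_nonneg a, sq_nonneg b]
  refine ⟨a • x + b • w, fun h0 => ?_, ?_, ?_⟩
  · have := congrArg (x ⬝ᵥ ·) h0
    simp only [dotProduct_add, dotProduct_smul, hxw, smul_eq_mul, mul_zero, add_zero,
      dotProduct_zero] at this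
    have hxx : x ⬝ᵥ x ≠ 0 := by simpa using hx
    exact hvw (by simpa [hxx] using this)
  · simp only [a, b, dotProduct_add, dotProduct_smul, smul_eq_mul]; ring
  · exact le_of_pow_le_pow_left₀ two_ne_zero (vecNorm_nonneg _)
      (by rw [mul_pow]; exact hz)

end OperatorNorms

section SpectralGap

variable {β : Type*} [Fintype β]

/-- `G` expands every vector of the plane spanned by `𝟙` and `y` by at least `‖G y‖ / ‖y‖`:
`G 𝟙 = d 𝟙` is orthogonal to `G y` because `𝟙ᵀ G = d 𝟙ᵀ`, and `‖G y‖ ≤ d ‖y‖`. -/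
lemma vecNorm_mulVec_le_sigma2_mul {G : Matrix β β ℝ} {d : ℝ}
    (hspec : specNorm G ≤ d) (hrow : G *ᵥ (fun _ => 1) = fun _ => d)
    (hcol : (fun _ => 1) ᵥ* G = fun _ => d) {y : β → ℝ} (hy : ∑ i, y i = 0) :
    vecNorm (G *ᵥ y) ≤ sigma2 G * vecNorm y := by
  rcases eq_or_ne y 0 with rfl | hy0
  · simp [vecNorm]
  have hpos := vecNorm_pos hy0
  obtain ⟨i, -⟩ := Function.ne_iff.mp hy0
  set c := vecNorm (G *ᵥ y) / vecNorm y
  have hcy : c * vecNorm y = vecNorm (G *ᵥ y) := div_mul_cancel₀ _ hpos.ne'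
  have hcd : c ≤ d := (div_le_iff₀ hpos).mpr
    ((vecNorm_mulVec_le_specNorm_mul G y).trans (by gcongr))
  have hones : (fun _ => (1 : ℝ)) ≠ (0 : β → ℝ) := fun h => by simpa using congrFun h i
  have horth : (fun _ => (1 : ℝ)) ⬝ᵥ y = 0 := by simpa [dotProduct] using hy
  have hGorth : G *ᵥ (fun _ => 1) ⬝ᵥ G *ᵥ y = 0 := by
    rw [hrow, show (fun _ => d : β → ℝ) = d • fun _ => 1 by ext; simp, smul_dotProduct,
      dotProduct_mulVec, hcol]
    simp [dotProduct, ← mul_sum, hy]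
  have hcones : c * vecNorm (fun _ => (1 : ℝ) : β → ℝ) ≤ vecNorm (G *ᵥ fun _ => 1) := by
    rw [hrow, show (fun _ => d : β → ℝ) = d • fun _ => 1 by ext; simp, vecNorm_smul]
    exact mul_le_mul_of_nonneg_right (hcd.trans (le_abs_self d)) (vecNorm_nonneg _)
  rw [← hcy]
  exact mul_le_mul_of_nonneg_right
    (le_sigma2_of_orthogonal hones hy0 horth hGorth hcones hcy.le) hpos.le

end SpectralGap

section Centering

variable {β : Type*} [Fintype β] [Nonempty β]

lemma sum_sub_mean (p : β → ℝ) :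
    ∑ i, (p - ((∑ j, p j) / Fintype.card β) • 1) i = 0 := by
  have hN : (Fintype.card β : ℝ) ≠ 0 := by positivity
  simp only [Pi.sub_apply, Pi.smul_apply, Pi.one_apply, smul_eq_mul, mul_one, sum_sub_distrib,
    sum_const, card_univ, nsmul_eq_mul]
  field_simp
  ring

lemma vecNorm_sub_mean_le (p : β → ℝ) :
    vecNorm (p - ((∑ j, p j) / Fintype.card β) • 1) ≤ vecNorm p := by
  have hN : (Fintype.card β : ℝ) ≠ 0 := by positivity
  refine le_of_pow_le_pow_left₀ two_ne_zero (vecNorm_nonneg p) ?_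
  simp only [vecNorm_sq, dotProduct_sub, sub_dotProduct, dotProduct_smul, smul_dotProduct,
    one_dotProduct_one, smul_eq_mul]
  simp only [dotProduct_one, one_dotProduct]
  field_simp
  nlinarith [sq_nonneg (∑ j, p j)]

/-- Centering both vectors turns the bilinear form of `G - (d/N) 𝟙𝟙ᵀ` into that of `G`
on `𝟙^⊥`, where `G` contracts by `σ₂(G)`. -/
lemma abs_dotProduct_mulVec_sub_le {G : Matrix β β ℝ} {d : ℝ}
    (hspec : specNorm G ≤ d) (hrow : G *ᵥ (fun _ => 1) = fun _ => d)
    (hcol : (fun _ => 1) ᵥ* G = fun _ => d) (p q : β → ℝ) :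
    |p ⬝ᵥ (G - of fun _ _ => d / Fintype.card β) *ᵥ q| ≤
      sigma2 G * (vecNorm p * vecNorm q) := by
  have hN : (Fintype.card β : ℝ) ≠ 0 := by positivity
  set p' := p - ((∑ j, p j) / Fintype.card β) • 1
  set q' := q - ((∑ j, q j) / Fintype.card β) • 1
  have hG1 : G *ᵥ 1 = d • 1 := by rw [show (1 : β → ℝ) = fun _ => 1 from rfl, hrow]; ext; simp
  have h1G : 1 ᵥ* G = d • 1 := by rw [show (1 : β → ℝ) = fun _ => 1 from rfl, hcol]; ext; simp
  have hJ : (of fun _ _ => d / Fintype.card β : Matrix β β ℝ) *ᵥ q =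
      (d / Fintype.card β * ∑ j, q j) • 1 := by
    ext; simp [mulVec, dotProduct, mul_sum]
  have hcenter : p ⬝ᵥ (G - of fun _ _ => d / Fintype.card β) *ᵥ q = p' ⬝ᵥ G *ᵥ q' := by
    simp only [p', q', sub_mulVec, hJ, mulVec_sub, mulVec_smul, hG1, dotProduct_sub,
      sub_dotProduct, dotProduct_smul, smul_dotProduct, dotProduct_mulVec 1 G q, h1G,
      one_dotProduct_one, smul_eq_mul]
    simp only [dotProduct_one, one_dotProduct]
    field_simp
    ring
  have hσ := sigma2_nonneg G
  rw [hcenter]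
  calc |p' ⬝ᵥ G *ᵥ q'| ≤ vecNorm p' * vecNorm (G *ᵥ q') := abs_dotProduct_le _ _
    _ ≤ vecNorm p * (sigma2 G * vecNorm q) :=
        mul_le_mul (vecNorm_sub_mean_le p)
          ((vecNorm_mulVec_le_sigma2_mul hspec hrow hcol (sum_sub_mean q)).trans
            (mul_le_mul_of_nonneg_left (vecNorm_sub_mean_le q) hσ))
          (vecNorm_nonneg _) (vecNorm_nonneg p)
    _ = sigma2 G * (vecNorm p * vecNorm q) := by ring

end Centering

section Incoherence

variable {n r : ℕ}

lemma le_sum_sq_mulVec_of_strongIncoherence {d : ℕ} {δ : ℝ} {U : Matrix (Fin n) (Fin r) ℝ}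
    (hU : StrongIncoherence U d δ) (hn : 0 < n) (hd : 0 < d) {S : Finset (Fin n)}
    (hS : S.card = d) (a : Fin r → ℝ) :
    d / n * ((1 - δ) * vecNorm a ^ 2) ≤ ∑ i ∈ S, (U *ᵥ a) i ^ 2 := by
  set M := ∑ k ∈ S, vecMulVec (U k) (U k)
  have hquad : ∑ i ∈ S, (U *ᵥ a) i ^ 2 = a ⬝ᵥ M *ᵥ a := by
    simp only [M, sum_mulVec, dotProduct_sum, vecMulVec_mulVec]
    refine sum_congr rfl fun k _ => ?_
    simp [mulVec, dotProduct_comm, sq]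
  have hdev : |(n / d : ℝ) * (a ⬝ᵥ M *ᵥ a) - vecNorm a ^ 2| ≤ δ * vecNorm a ^ 2 := by
    have h := (abs_dotProduct_le a (((n / d : ℝ) • M - 1) *ᵥ a)).trans
      (mul_le_mul_of_nonneg_left (vecNorm_mulVec_le_specNorm_mul _ a) (vecNorm_nonneg a))
    rw [sub_mulVec, smul_mulVec, one_mulVec, dotProduct_sub, dotProduct_smul, ← vecNorm_sq,
      smul_eq_mul] at h
    calc _ ≤ _ := h
      _ ≤ δ * vecNorm a ^ 2 := by
        rw [← mul_assoc, mul_comm (vecNorm a), mul_assoc, ← sq]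
        exact mul_le_mul_of_nonneg_right (hU S hS) (sq_nonneg _)
  have hnd : (d / n : ℝ) * (n / d) = 1 := by field_simp
  have hlow : (1 - δ) * vecNorm a ^ 2 ≤ (n / d : ℝ) * (a ⬝ᵥ M *ᵥ a) := by
    linarith [(abs_le.mp hdev).1]
  calc _ ≤ (d / n : ℝ) * ((n / d : ℝ) * (a ⬝ᵥ M *ᵥ a)) :=
        mul_le_mul_of_nonneg_left hlow (by positivity)
    _ = _ := by rw [← mul_assoc, hnd, one_mul, hquad]

lemma sum_sum_vecNorm_sq_le_of_incoherentRows {κ : Type*} [Fintype κ] {μ₀ : ℝ}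
    {U : Matrix (Fin n) (Fin r) ℝ} (hU : IncoherentRows U μ₀) (B : Matrix (Fin n) κ ℝ) :
    ∑ s, ∑ t, vecNorm (fun i => U i s * B i t) ^ 2 ≤ μ₀ * r / n * frobNorm B ^ 2 := by
  calc ∑ s, ∑ t, vecNorm (fun i => U i s * B i t) ^ 2
        = ∑ i, (∑ s, U i s ^ 2) * ∑ t, B i t ^ 2 := by
        simp only [vecNorm_sq, dotProduct, sum_mul_sum]
        conv_rhs => rw [sum_comm]
        refine sum_congr rfl fun s _ => ?_
        rw [sum_comm]
        exact sum_congr rfl fun t _ => sum_congr rfl fun i _ => by ring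
    _ ≤ ∑ i, μ₀ * r / n * ∑ t, B i t ^ 2 :=
        sum_le_sum fun i _ => mul_le_mul_of_nonneg_right (hU i) (by positivity)
    _ = μ₀ * r / n * frobNorm B ^ 2 := by rw [← mul_sum, frobNorm, Real.sq_sqrt (by positivity)]

end Incoherence

section Frobenius

variable {ι κ m p : Type*} [Fintype ι] [Fintype κ] [Fintype m] [Fintype p]

lemma frobNorm_nonneg (A : Matrix ι κ ℝ) : 0 ≤ frobNorm A := Real.sqrt_nonneg _

lemma sum_sum_mul_eq_trace (X Y : Matrix ι κ ℝ) :
    ∑ i, ∑ j, X i j * Y i j = (Xᵀ * Y).trace := by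
  rw [trace, sum_comm]
  simp [mul_apply]

lemma frobNorm_sq (A : Matrix ι κ ℝ) : frobNorm A ^ 2 = ∑ i, ∑ j, A i j ^ 2 :=
  Real.sq_sqrt (by positivity)

lemma frobNorm_sq_eq_sum_vecNorm_sq (A : Matrix ι κ ℝ) :
    frobNorm A ^ 2 = ∑ i, vecNorm (A i) ^ 2 := by
  simp only [frobNorm_sq, vecNorm_sq, dotProduct]
  simp only [sq]

lemma frobNorm_sq_eq_trace (A : Matrix ι κ ℝ) : frobNorm A ^ 2 = (Aᵀ * A).trace := by
  rw [frobNorm_sq, ← sum_sum_mul_eq_trace]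
  simp only [sq]

lemma frobNorm_transpose (A : Matrix ι κ ℝ) : frobNorm Aᵀ = frobNorm A := by
  rw [frobNorm, frobNorm, sum_comm]
  rfl

lemma frobNorm_pos {A : Matrix ι κ ℝ} (hA : A ≠ 0) : 0 < frobNorm A := by
  obtain ⟨i, j, hij⟩ : ∃ i j, A i j ≠ 0 := by
    by_contra! h
    exact hA (Matrix.ext h)
  refine Real.sqrt_pos.mpr (sum_pos' (fun _ _ => by positivity) ⟨i, mem_univ i, ?_⟩)
  exact sum_pos' (fun _ _ => by positivity) ⟨j, mem_univ j, by positivity⟩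

lemma frobNorm_sq_mul_add_mul_transpose [DecidableEq ι] [DecidableEq κ] {U : Matrix m ι ℝ}
    {V : Matrix p κ ℝ} {B : Matrix m κ ℝ} (hU : Uᵀ * U = 1) (hV : Vᵀ * V = 1) (hUB : Uᵀ * B = 0)
    (A : Matrix ι p ℝ) :
    frobNorm (U * A + B * Vᵀ) ^ 2 = frobNorm A ^ 2 + frobNorm B ^ 2 := by
  have hBU : Bᵀ * U = 0 := by rw [← transpose_transpose U, ← transpose_mul, hUB, transpose_zero]
  have hAA : Aᵀ * Uᵀ * (U * A) = Aᵀ * A := by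
    rw [Matrix.mul_assoc, ← Matrix.mul_assoc Uᵀ, hU, Matrix.one_mul]
  have hAB : Aᵀ * Uᵀ * (B * Vᵀ) = 0 := by
    rw [Matrix.mul_assoc, ← Matrix.mul_assoc Uᵀ, hUB, Matrix.zero_mul, Matrix.mul_zero]
  have hBA : V * Bᵀ * (U * A) = 0 := by
    rw [Matrix.mul_assoc, ← Matrix.mul_assoc Bᵀ, hBU, Matrix.zero_mul, Matrix.mul_zero]
  have hBB : (V * Bᵀ * (B * Vᵀ)).trace = (Bᵀ * B).trace := by
    rw [trace_mul_comm, ← Matrix.mul_assoc, Matrix.mul_assoc _ Vᵀ, hV, Matrix.mul_one,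
      trace_mul_comm]
  simp only [frobNorm_sq_eq_trace, transpose_add, transpose_mul, transpose_transpose,
    Matrix.add_mul, Matrix.mul_add, trace_add, hAA, hAB, hBA, hBB, trace_zero]
  ring

lemma sum_sum_mul_mul_transpose_eq_zero {U : Matrix m ι ℝ} {B : Matrix m κ ℝ}
    (hUB : Uᵀ * B = 0) (A : Matrix ι p ℝ) (V : Matrix p κ ℝ) :
    ∑ i, ∑ j, (U * A) i j * (B * Vᵀ) i j = 0 := by
  rw [sum_sum_mul_eq_trace, transpose_mul, Matrix.mul_assoc, ← Matrix.mul_assoc Uᵀ, hUB]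
  simp

/-- `‖A‖_F² = tr(AᵀA) = ∑ λᵢ ≤ (∑ √λᵢ)² = ‖A‖_*²`. -/
lemma frobNorm_le_nuclearNorm [DecidableEq κ] (A : Matrix ι κ ℝ) :
    frobNorm A ≤ nuclearNorm A := by
  set h := (posSemidef_conjTranspose_mul_self A).1
  have hQ : (star h.eigenvectorUnitary : Matrix κ κ ℝ) * h.eigenvectorUnitary.1 = 1 :=
    Unitary.star_mul_self_of_mem h.eigenvectorUnitary.2
  have hnuc : nuclearNorm A = ∑ i, √(h.eigenvalues i) := by
    rw [nuclearNorm, trace_mul_comm, ← Matrix.mul_assoc, hQ, Matrix.one_mul, trace_diagonal]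
    rfl
  have hfrob : frobNorm A ^ 2 = ∑ i, h.eigenvalues i := by
    rw [frobNorm_sq_eq_trace, ← conjTranspose_eq_transpose_of_trivial, h.trace_eq_sum_eigenvalues]
    simp
  have hev : ∀ i, 0 ≤ h.eigenvalues i := (posSemidef_conjTranspose_mul_self A).eigenvalues_nonneg
  rw [← Real.sqrt_sq (frobNorm_nonneg A), hfrob, hnuc]
  refine Real.sqrt_le_iff.mpr ⟨by positivity, ?_⟩
  calc ∑ i, h.eigenvalues i = ∑ i, √(h.eigenvalues i) ^ 2 :=
        sum_congr rfl fun i _ => (Real.sq_sqrt (hev i)).symm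
    _ ≤ (∑ i, √(h.eigenvalues i)) ^ 2 := sum_sq_le_sq_sum_of_nonneg fun _ _ => Real.sqrt_nonneg _

lemma sum_sum_mul_mul_mul_transpose_eq (H : Matrix m p ℝ) (U : Matrix m ι ℝ)
    (A : Matrix ι p ℝ) (B : Matrix m κ ℝ) (V : Matrix p κ ℝ) :
    ∑ i, ∑ j, H i j * ((U * A) i j * (B * Vᵀ) i j) =
      ∑ s, ∑ t, (fun i => U i s * B i t) ⬝ᵥ H *ᵥ fun j => A s j * V j t := by
  calc ∑ i, ∑ j, H i j * ((U * A) i j * (B * Vᵀ) i j)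
        = ∑ i, ∑ j, ∑ s, ∑ t, U i s * B i t * (H i j * (A s j * V j t)) := by
        refine sum_congr rfl fun i _ => sum_congr rfl fun j _ => ?_
        rw [mul_apply, mul_apply, sum_mul_sum, mul_sum]
        refine sum_congr rfl fun s _ => ?_
        rw [mul_sum]
        exact sum_congr rfl fun t _ => by rw [transpose_apply]; ring
    _ = ∑ s, ∑ t, ∑ i, ∑ j, U i s * B i t * (H i j * (A s j * V j t)) := by
        simp_rw [sum_comm (s := (univ : Finset p)) (t := (univ : Finset ι))]
        rw [sum_comm]
        simp_rw [sum_comm (s := (univ : Finset p)) (t := (univ : Finset κ))]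
        exact sum_congr rfl fun s _ => sum_comm
    _ = _ := by simp only [dotProduct, mulVec, mul_sum]

end Frobenius

section Sampling

variable {n r : ℕ} {Ω : Finset (Fin n × Fin n)}

lemma frobNorm_sampl_sq (X : Matrix (Fin n) (Fin n) ℝ) :
    frobNorm (sampl Ω X) ^ 2 = ∑ i, ∑ j, biadj Ω i j * X i j ^ 2 := by
  rw [frobNorm_sq]
  refine sum_congr rfl fun i _ => sum_congr rfl fun j _ => ?_
  simp only [sampl, biadj, of_apply]
  split_ifs <;> simp

lemma frobNorm_sampl_add_sq (X Y : Matrix (Fin n) (Fin n) ℝ) :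
    frobNorm (sampl Ω (X + Y)) ^ 2 = frobNorm (sampl Ω X) ^ 2 +
      2 * ∑ i, ∑ j, biadj Ω i j * (X i j * Y i j) + frobNorm (sampl Ω Y) ^ 2 := by
  simp only [frobNorm_sampl_sq, mul_sum, ← sum_add_distrib]
  refine sum_congr rfl fun i _ => sum_congr rfl fun j _ => ?_
  simp only [Matrix.add_apply]
  ring

lemma frobNorm_sampl_le_of_sampl_add_eq_zero {X Y : Matrix (Fin n) (Fin n) ℝ}
    (h : sampl Ω (X + Y) = 0) : frobNorm (sampl Ω X) ≤ frobNorm Y := by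
  refine Real.sqrt_le_sqrt (sum_le_sum fun i _ => sum_le_sum fun j _ => ?_)
  have hij := congrFun (congrFun h i) j
  simp only [sampl, of_apply, Matrix.add_apply, Matrix.zero_apply] at hij ⊢
  split_ifs at hij ⊢
  · rw [eq_neg_of_add_eq_zero_left hij, neg_sq]
  · simpa using sq_nonneg (Y i j)

lemma frobNorm_sampl_sq_eq_sum_row (X : Matrix (Fin n) (Fin n) ℝ) :
    frobNorm (sampl Ω X) ^ 2 = ∑ i, ∑ j ∈ univ.filter fun j => (i, j) ∈ Ω, X i j ^ 2 := by
  simp only [frobNorm_sampl_sq, sum_filter, biadj, of_apply, boole_mul]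

lemma frobNorm_sampl_sq_eq_sum_col (X : Matrix (Fin n) (Fin n) ℝ) :
    frobNorm (sampl Ω X) ^ 2 = ∑ j, ∑ i ∈ univ.filter fun i => (i, j) ∈ Ω, X i j ^ 2 := by
  rw [frobNorm_sampl_sq, sum_comm]
  simp only [sum_filter, biadj, of_apply, boole_mul]

lemma le_frobNorm_sampl_mul_sq {d : ℕ} {δ : ℝ} {U : Matrix (Fin n) (Fin r) ℝ}
    (hU : StrongIncoherence U d δ) (hn : 0 < n) (hd : 0 < d)
    (hcol : ∀ j, (univ.filter fun i => (i, j) ∈ Ω).card = d) (A : Matrix (Fin r) (Fin n) ℝ) :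
    d / n * ((1 - δ) * frobNorm A ^ 2) ≤ frobNorm (sampl Ω (U * A)) ^ 2 := by
  rw [← frobNorm_transpose, frobNorm_sq_eq_sum_vecNorm_sq, frobNorm_sampl_sq_eq_sum_col,
    mul_sum, mul_sum]
  exact sum_le_sum fun j _ => le_sum_sq_mulVec_of_strongIncoherence hU hn hd (hcol j) (Aᵀ j)

lemma le_frobNorm_sampl_mul_transpose_sq {d : ℕ} {δ : ℝ} {V : Matrix (Fin n) (Fin r) ℝ}
    (hV : StrongIncoherence V d δ) (hn : 0 < n) (hd : 0 < d)
    (hrow : ∀ i, (univ.filter fun j => (i, j) ∈ Ω).card = d) (B : Matrix (Fin n) (Fin r) ℝ) :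
    d / n * ((1 - δ) * frobNorm B ^ 2) ≤ frobNorm (sampl Ω (B * Vᵀ)) ^ 2 := by
  rw [frobNorm_sq_eq_sum_vecNorm_sq, frobNorm_sampl_sq_eq_sum_row, mul_sum, mul_sum]
  refine sum_le_sum fun i _ =>
    (le_sum_sq_mulVec_of_strongIncoherence hV hn hd (hrow i) (B i)).trans_eq
      (sum_congr rfl fun j _ => ?_)
  simp only [mulVec, mul_apply, dotProduct, transpose_apply, mul_comm]

end Sampling

lemma two_mul_abs_sum_mul_mul_le {n r : ℕ} [NeZero n] {G : Matrix (Fin n) (Fin n) ℝ} {d μ₀ : ℝ}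
    (hspec : specNorm G ≤ d) (hrow : G *ᵥ (fun _ => 1) = fun _ => d)
    (hcol : (fun _ => 1) ᵥ* G = fun _ => d) {U V B : Matrix (Fin n) (Fin r) ℝ}
    (hU : IncoherentRows U μ₀) (hV : IncoherentRows V μ₀) (hUB : Uᵀ * B = 0)
    (A : Matrix (Fin r) (Fin n) ℝ) :
    2 * |∑ i, ∑ j, G i j * ((U * A) i j * (B * Vᵀ) i j)| ≤
      sigma2 G * (μ₀ * r / n) * (frobNorm A ^ 2 + frobNorm B ^ 2) := by
  set H : Matrix (Fin n) (Fin n) ℝ := G - of fun _ _ => d / Fintype.card (Fin n)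
  set p : Fin r → Fin r → Fin n → ℝ := fun s t i => U i s * B i t
  set q : Fin r → Fin r → Fin n → ℝ := fun s t j => A s j * V j t
  -- `U A ⟂ B Vᵀ`, so the mean part `(d/n) 𝟙𝟙ᵀ` of `G` does not contribute.
  have hH : ∑ i, ∑ j, G i j * ((U * A) i j * (B * Vᵀ) i j) = ∑ s, ∑ t, p s t ⬝ᵥ H *ᵥ q s t := by
    rw [← sum_sum_mul_mul_mul_transpose_eq]
    simp only [H, Matrix.sub_apply, of_apply, sub_mul, sum_sub_distrib, ← mul_sum,
      sum_sum_mul_mul_transpose_eq_zero hUB A V, mul_zero, sub_zero]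
  have hσ := sigma2_nonneg G
  have hpq (s t : Fin r) : 2 * |p s t ⬝ᵥ H *ᵥ q s t| ≤
      sigma2 G * (vecNorm (p s t) ^ 2 + vecNorm (q s t) ^ 2) := by
    have := abs_dotProduct_mulVec_sub_le hspec hrow hcol (p s t) (q s t)
    nlinarith [two_mul_le_add_sq (vecNorm (p s t)) (vecNorm (q s t))]
  have hp : ∑ s, ∑ t, vecNorm (p s t) ^ 2 ≤ μ₀ * r / n * frobNorm B ^ 2 :=
    sum_sum_vecNorm_sq_le_of_incoherentRows hU B
  have hq : ∑ s, ∑ t, vecNorm (q s t) ^ 2 ≤ μ₀ * r / n * frobNorm A ^ 2 := by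
    have := sum_sum_vecNorm_sq_le_of_incoherentRows hV Aᵀ
    rw [frobNorm_transpose, sum_comm] at this
    simpa only [q, transpose_apply, mul_comm] using this
  calc 2 * |∑ i, ∑ j, G i j * ((U * A) i j * (B * Vᵀ) i j)|
        ≤ ∑ s, ∑ t, 2 * |p s t ⬝ᵥ H *ᵥ q s t| := by
        simp only [hH, ← mul_sum]
        exact mul_le_mul_of_nonneg_left ((abs_sum_le_sum_abs _ _).trans
          (sum_le_sum fun s _ => abs_sum_le_sum_abs _ _)) zero_le_two
    _ ≤ ∑ s, ∑ t, sigma2 G * (vecNorm (p s t) ^ 2 + vecNorm (q s t) ^ 2) :=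
        sum_le_sum fun s _ => sum_le_sum fun t _ => hpq s t
    _ = sigma2 G * (∑ s, ∑ t, vecNorm (p s t) ^ 2 + ∑ s, ∑ t, vecNorm (q s t) ^ 2) := by
        simp only [← mul_sum, ← sum_add_distrib]
    _ ≤ sigma2 G * (μ₀ * r / n * frobNorm B ^ 2 + μ₀ * r / n * frobNorm A ^ 2) := by gcongr
    _ = sigma2 G * (μ₀ * r / n) * (frobNorm A ^ 2 + frobNorm B ^ 2) := by ring

section Projections

variable {n r : ℕ}

lemma projT_add_projTperp (U V : Matrix (Fin n) (Fin r) ℝ) (Z : Matrix (Fin n) (Fin n) ℝ) :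
    projT U V Z + projTperp U V Z = Z := by
  unfold projT projTperp
  noncomm_ring

lemma projT_eq_mul_add_mul_transpose (U V : Matrix (Fin n) (Fin r) ℝ)
    (Z : Matrix (Fin n) (Fin n) ℝ) :
    projT U V Z = U * (Uᵀ * Z) + (1 - U * Uᵀ) * Z * V * Vᵀ := by
  simp only [projT, Matrix.sub_mul, Matrix.one_mul, Matrix.mul_assoc]
  abel

lemma transpose_mul_one_sub_mul_eq_zero {U : Matrix (Fin n) (Fin r) ℝ} (hU : Uᵀ * U = 1)
    (V : Matrix (Fin n) (Fin r) ℝ) (Z : Matrix (Fin n) (Fin n) ℝ) :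
    Uᵀ * ((1 - U * Uᵀ) * Z * V) = 0 := by
  rw [← Matrix.mul_assoc, ← Matrix.mul_assoc, Matrix.mul_sub, Matrix.mul_one,
    ← Matrix.mul_assoc, hU, Matrix.one_mul, sub_self, Matrix.zero_mul, Matrix.zero_mul]

end Projections

lemma mul_frobNorm_projT_sq_le_frobNorm_sampl_sq {n r d : ℕ} (hn : 0 < n) (hd : 0 < d) {μ₀ δ : ℝ}
    {U V : Matrix (Fin n) (Fin r) ℝ} (hU : Uᵀ * U = 1) (hV : Vᵀ * V = 1)
    (hA1U : IncoherentRows U μ₀) (hA1V : IncoherentRows V μ₀)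
    (hA2U : StrongIncoherence U d δ) (hA2V : StrongIncoherence V d δ)
    {Ω : Finset (Fin n × Fin n)} (hreg : RegularSampling Ω d) (hG1 : AssumptionG1 Ω d)
    (Z : Matrix (Fin n) (Fin n) ℝ) :
    (d / n * (1 - δ) - sigma2 (biadj Ω) * (μ₀ * r / n)) * frobNorm (projT U V Z) ^ 2 ≤
      frobNorm (sampl Ω (projT U V Z)) ^ 2 := by
  have : NeZero n := ⟨hn.ne'⟩
  obtain ⟨hspec, hrow, hcol⟩ := hG1
  set A := Uᵀ * Z
  set B := (1 - U * Uᵀ) * Z * V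
  have hUB : Uᵀ * B = 0 := transpose_mul_one_sub_mul_eq_zero hU V Z
  have hQA := le_frobNorm_sampl_mul_sq hA2U hn hd hreg.2 A
  have hQB := le_frobNorm_sampl_mul_transpose_sq hA2V hn hd hreg.1 B
  have hQC := two_mul_abs_sum_mul_mul_le hspec.le hrow hcol hA1U hA1V hUB A
  rw [projT_eq_mul_add_mul_transpose, frobNorm_sq_mul_add_mul_transpose hU hV hUB,
    frobNorm_sampl_add_sq]
  nlinarith [neg_abs_le (∑ i, ∑ j, biadj Ω i j * ((U * A) i j * (B * Vᵀ) i j))]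

lemma div_two_mul_lt_of_sqrt_lt_half {n d C μ₀ r δ σ : ℝ} (hn : 0 < n) (hd : 0 < d)
    (hm : 0 ≤ μ₀ * r / n) (hσ : σ ≤ C * √d)
    (hsmall : √(2 * (δ ^ 2 + C ^ 2 * μ₀ ^ 2 * r ^ 2 / d)) < 1 / 2) :
    d / (2 * n) < d / n * (1 - δ) - σ * (μ₀ * r / n) := by
  set b := C * μ₀ * r / √d
  have hb : b ^ 2 = C ^ 2 * μ₀ ^ 2 * r ^ 2 / d := by
    rw [div_pow, Real.sq_sqrt hd.le]
    ring
  have hδb : δ + b < 1 / 2 := by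
    refine lt_of_le_of_lt ((le_abs_self _).trans (Real.abs_le_sqrt ?_)) hsmall
    nlinarith [sq_nonneg (δ - b)]
  have hσm : σ * (μ₀ * r / n) ≤ d / n * b := by
    calc σ * (μ₀ * r / n) ≤ C * √d * (μ₀ * r / n) := mul_le_mul_of_nonneg_right hσ hm
      _ = d / n * b := by
        have hsd : √d ≠ 0 := (Real.sqrt_pos.mpr hd).ne'
        simp only [b]
        field_simp
        linear_combination C * μ₀ * r * Real.mul_self_sqrt hd.le
  have hdn : 0 < d / n := div_pos hd hn
  calc d / (2 * n) = d / n * (1 / 2) := by ring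
    _ < d / n * (1 - δ - b) := mul_lt_mul_of_pos_left (by linarith) hdn
    _ ≤ d / n * (1 - δ) - σ * (μ₀ * r / n) := by linarith

theorem stmt_14_general {n d r : ℕ} (hn : 0 < n) (hd : 0 < d) {C μ₀ δ : ℝ}
    (M : Matrix (Fin n) (Fin n) ℝ) (U V : Matrix (Fin n) (Fin r) ℝ) (s : Fin r → ℝ)
    (hSVD : IsThinSVD M U s V)
    (hA1U : IncoherentRows U μ₀) (hA1V : IncoherentRows V μ₀)
    (hA2U : StrongIncoherence U d δ) (hA2V : StrongIncoherence V d δ)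
    (Ω : Finset (Fin n × Fin n)) (hreg : RegularSampling Ω d)
    (hG1 : AssumptionG1 Ω d) (hG2 : AssumptionG2 Ω d C)
    (hsmall : Real.sqrt (2 * (δ ^ 2 + C ^ 2 * μ₀ ^ 2 * r ^ 2 / d)) < 1 / 2) :
    ∀ Z : Matrix (Fin n) (Fin n) ℝ, sampl Ω Z = 0 → projT U V Z ≠ 0 →
      Real.sqrt ((d : ℝ) / (2 * n)) * frobNorm (projT U V Z) < frobNorm (projTperp U V Z) ∧
      Real.sqrt ((d : ℝ) / (2 * n)) * frobNorm (projT U V Z) <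
        nuclearNorm (projTperp U V Z) := by
  intro Z hZ hT
  obtain ⟨hU, hV, -, -⟩ := hSVD
  have hm : 0 ≤ μ₀ * r / n := (sum_nonneg fun k _ => sq_nonneg (U ⟨0, hn⟩ k)).trans (hA1U ⟨0, hn⟩)
  have hconst :=
    div_two_mul_lt_of_sqrt_lt_half (Nat.cast_pos.mpr hn) (Nat.cast_pos.mpr hd) hm hG2 hsmall
  have hlow := mul_frobNorm_projT_sq_le_frobNorm_sampl_sq hn hd hU hV hA1U hA1V hA2U hA2V hreg hG1 Z
  have hΩ : frobNorm (sampl Ω (projT U V Z)) ≤ frobNorm (projTperp U V Z) :=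
    frobNorm_sampl_le_of_sampl_add_eq_zero (by rwa [projT_add_projTperp])
  have hfrob : √(d / (2 * n) : ℝ) * frobNorm (projT U V Z) < frobNorm (projTperp U V Z) := by
    refine lt_of_pow_lt_pow_left₀ 2 (frobNorm_nonneg _) ?_
    rw [mul_pow, Real.sq_sqrt (by positivity)]
    calc _ < _ * frobNorm (projT U V Z) ^ 2 :=
          mul_lt_mul_of_pos_right hconst (pow_pos (frobNorm_pos hT) 2)
      _ ≤ frobNorm (sampl Ω (projT U V Z)) ^ 2 := hlow
      _ ≤ frobNorm (projTperp U V Z) ^ 2 := pow_le_pow_left₀ (frobNorm_nonneg _) hΩ 2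
  exact ⟨hfrob, hfrob.trans_le (frobNorm_le_nuclearNorm _)⟩

/-- for `Z` in the kernel of `P_Ω` with `P_T(Z) ≠ 0`,
`‖P_{T⊥}(Z)‖_F > √(d/(2n))·‖P_T(Z)‖_F`, and a fortiori the same with the
nuclear norm on the left. -/
theorem stmt_14 {n d r : ℕ} (hn : 0 < n) (hd : 0 < d) (hr : 0 < r) {C μ₀ δ : ℝ} (hC : 0 < C)
    (M : Matrix (Fin n) (Fin n) ℝ) (U V : Matrix (Fin n) (Fin r) ℝ) (s : Fin r → ℝ)
    (hSVD : IsThinSVD M U s V) (hrank : M.rank = r)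
    (hA1U : IncoherentRows U μ₀) (hA1V : IncoherentRows V μ₀)
    (hA2U : StrongIncoherence U d δ) (hA2V : StrongIncoherence V d δ)
    (Ω : Finset (Fin n × Fin n)) (hreg : RegularSampling Ω d)
    (hG1 : AssumptionG1 Ω d) (hG2 : AssumptionG2 Ω d C)
    (hsmall : Real.sqrt (2 * (δ ^ 2 + C ^ 2 * μ₀ ^ 2 * r ^ 2 / d)) < 1 / 2) :
    ∀ Z : Matrix (Fin n) (Fin n) ℝ, sampl Ω Z = 0 → projT U V Z ≠ 0 →
      Real.sqrt ((d : ℝ) / (2 * n)) * frobNorm (projT U V Z) < frobNorm (projTperp U V Z) ∧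
      Real.sqrt ((d : ℝ) / (2 * n)) * frobNorm (projT U V Z) <
        nuclearNorm (projTperp U V Z) :=
  stmt_14_general hn hd M U V s hSVD hA1U hA1V hA2U hA2V Ω hreg hG1 hG2 hsmall
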